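/- arXiv:1705.08163 — 2 statements merged into one kernel-verified Lean document; each statement's English description precedes it below -/
import Mathlib

section
/- Let f : [0,∞) → ℝ be continuous with f(0) ≥ 0, let (a, x) be its Skorokhod decomposition, and let β, υ > 0. If (b, y) is an approximate (β, υ) decomposition of f, then 0 ≤ b(t) − a(t) ≤ υ + β t for all t ≥ 0. -/
open Set Filter MeasureTheory

/-- An admissible pair `(b, y)` for a continuous `f : [0,∞) → ℝ` with `f 0 ≥ 0`:
`b` continuous nondecreasing, `y` continuous nonnegative, `y = b + f`, `y 0 = f 0`. -/
def AdmissiblePair (f b y : ℝ → ℝ) : Prop :=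
  ContinuousOn b (Set.Ici 0) ∧ ContinuousOn y (Set.Ici 0) ∧
  MonotoneOn b (Set.Ici 0) ∧ (∀ t ∈ Set.Ici (0:ℝ), 0 ≤ y t) ∧
  (∀ t ∈ Set.Ici (0:ℝ), y t = b t + f t) ∧ y 0 = f 0

/-- A Skorokhod decomposition `(a, x)` of `f`: an admissible pair with `a`
locally constant on `{t : x t > 0}`. -/
def SkorokhodDecomp (f a x : ℝ → ℝ) : Prop :=
  AdmissiblePair f a x ∧
  ∀ t ∈ Set.Ici (0:ℝ), 0 < x t → ∀ᶠ s in nhdsWithin t (Set.Ici 0), a s = a t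

/-- An approximate `(β, υ)` decomposition of `f`: an admissible pair `(b, y)`
such that whenever `y ≥ υ` on `[s, u]`, `b u - b s ≤ β (u - s)`. -/
def ApproxDecomp (β υ : ℝ) (f b y : ℝ → ℝ) : Prop :=
  AdmissiblePair f b y ∧
  ∀ s u : ℝ, 0 ≤ s → s ≤ u → (∀ t ∈ Set.Icc s u, υ ≤ y t) → b u - b s ≤ β * (u - s)

/-!
The Skorokhod regulator `a` is the smallest admissible one: on an excursion interval where
`a > b` we get `x > y ≥ 0`, so `a` is frozen there, and it started out at most `b`.
For the upper bound, take the last time `s ≤ t` with `y s ≤ υ` (or `s = 0`). There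
`b s ≤ υ - f s ≤ υ + a s`, and on `(s, t]` the approximate condition gives
`b t - b s ≤ β (t - s)`.
-/

lemma exists_last_nonpos {g : ℝ → ℝ} {r t : ℝ} (hg : ContinuousOn g (Icc r t)) (hrt : r ≤ t)
    (hr : g r ≤ 0) : ∃ s ∈ Icc r t, g s ≤ 0 ∧ ∀ u ∈ Ioc s t, 0 < g u := by
  set S := Icc r t ∩ g ⁻¹' Iic 0
  have hS : IsClosed S := hg.preimage_isClosed_of_isClosed isClosed_Icc isClosed_Iic
  have hSne : S.Nonempty := ⟨r, ⟨le_rfl, hrt⟩, hr⟩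
  have hSbdd : BddAbove S := ⟨t, fun u hu => hu.1.2⟩
  obtain ⟨hs, hgs⟩ := hS.csSup_mem hSne hSbdd
  refine ⟨sSup S, hs, hgs, fun u hu => lt_of_not_ge fun hgu => ?_⟩
  exact hu.1.not_ge (le_csSup hSbdd ⟨⟨hs.1.trans hu.1.le, hu.2⟩, hgu⟩)

lemma eq_of_eventually_eq_on_Ioo {a : ℝ → ℝ} {r t : ℝ} (ha : ContinuousOn a (Icc r t))
    (hrt : r ≤ t) (hloc : ∀ u ∈ Ioo r t, ∀ᶠ s in nhds u, a s = a u) : a r = a t := by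
  rcases hrt.eq_or_lt with rfl | hrt
  · rfl
  have hderiv : ∀ u ∈ Ioo r t, HasDerivAt a 0 u := fun u hu =>
    (hasDerivAt_const u (a u)).congr_of_eventuallyEq (hloc u hu)
  obtain ⟨c, -, hc⟩ := exists_hasDerivAt_eq_slope a (fun _ => 0) hrt ha hderiv
  rw [eq_comm, div_eq_zero_iff, sub_eq_zero] at hc
  exact (hc.resolve_right (sub_ne_zero.2 hrt.ne')).symm

namespace AdmissiblePair

variable {f b y : ℝ → ℝ}

lemma apply_zero (h : AdmissiblePair f b y) : b 0 = 0 := by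
  have := h.2.2.2.2.1 0 self_mem_Ici
  linarith [h.2.2.2.2.2]

lemma neg_le {t : ℝ} (h : AdmissiblePair f b y) (ht : 0 ≤ t) : -f t ≤ b t := by
  linarith [h.2.2.2.1 t ht, h.2.2.2.2.1 t ht]

end AdmissiblePair

namespace SkorokhodDecomp

variable {f a x : ℝ → ℝ}

lemma eventually_eq {t : ℝ} (h : SkorokhodDecomp f a x) (ht : 0 < t) (hx : 0 < x t) :
    ∀ᶠ s in nhds t, a s = a t := by
  rw [← nhdsWithin_eq_nhds.2 (Ici_mem_nhds ht)]
  exact h.2 t ht.le hx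

lemma le_of_admissiblePair {b y : ℝ → ℝ} {t : ℝ} (h : SkorokhodDecomp f a x)
    (hb : AdmissiblePair f b y) (ht : 0 ≤ t) : a t ≤ b t := by
  have hab0 : a 0 - b 0 ≤ 0 := by rw [h.1.apply_zero, hb.apply_zero, sub_zero]
  obtain ⟨haC, -, -, -, hxeq, -⟩ := h.1
  obtain ⟨hbC, -, hbM, hypos, hyeq, -⟩ := hb
  obtain ⟨r, ⟨hr0, hrt⟩, habr, hbelow⟩ :=
    exists_last_nonpos (g := a - b) ((haC.sub hbC).mono fun u hu => hu.1) ht hab0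
  have hfrozen : a r = a t := by
    refine eq_of_eventually_eq_on_Ioo (haC.mono fun u hu => hr0.trans hu.1) hrt fun u hu => ?_
    have hu0 : 0 ≤ u := hr0.trans hu.1.le
    have hba : b u < a u := sub_pos.1 (hbelow u ⟨hu.1, hu.2.le⟩)
    exact h.eventually_eq (hr0.trans_lt hu.1) (by linarith [hxeq u hu0, hyeq u hu0, hypos u hu0])
  calc a t = a r := hfrozen.symm
    _ ≤ b r := sub_nonpos.1 habr
    _ ≤ b t := hbM hr0 (hr0.trans hrt) hrt

end SkorokhodDecomp

namespace ApproxDecomp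

variable {β υ : ℝ} {f b y : ℝ → ℝ}

lemma sub_le_of_forall_Ioc {s t : ℝ} (h : ApproxDecomp β υ f b y) (hs : 0 ≤ s) (hst : s ≤ t)
    (hy : ∀ u ∈ Ioc s t, υ ≤ y u) : b t - b s ≤ β * (t - s) := by
  rcases hst.eq_or_lt with rfl | hst
  · simp
  have hinterior : ∀ u ∈ Ioc s t, b t - β * (t - u) ≤ b u := fun u hu => by
    linarith [h.2 u t (hs.trans hu.1.le) hu.2 fun v hv => hy v ⟨hu.1.trans_le hv.1, hv.2⟩]
  have hbs : ContinuousWithinAt b (Ioc s t) s :=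
    (h.1.1 s hs).mono fun u hu => hs.trans hu.1.le
  have := ContinuousWithinAt.closure_le (by rw [closure_Ioc hst.ne]; exact ⟨le_rfl, hst.le⟩)
    (by fun_prop) hbs hinterior
  linarith

lemma exists_restart {a x : ℝ → ℝ} {t : ℝ} (h : ApproxDecomp β υ f b y)
    (hsk : SkorokhodDecomp f a x) (hυ : 0 < υ) (ht : 0 ≤ t) :
    ∃ s ∈ Icc 0 t, b s ≤ υ + a s ∧ ∀ u ∈ Ioc s t, υ ≤ y u := by
  by_cases hlow : ∃ r ∈ Icc 0 t, y r ≤ υ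
  · obtain ⟨r, ⟨hr0, hrt⟩, hyr⟩ := hlow
    obtain ⟨s, ⟨hrs, hst⟩, hys, habove⟩ :=
      exists_last_nonpos (g := fun u => y u - υ) ((h.1.2.1.sub continuousOn_const).mono
        fun u hu => hr0.trans hu.1) hrt (sub_nonpos.2 hyr)
    have hs0 : 0 ≤ s := hr0.trans hrs
    refine ⟨s, ⟨hs0, hst⟩, ?_, fun u hu => (sub_pos.1 (habove u hu)).le⟩
    linarith [h.1.2.2.2.2.1 s hs0, hsk.1.neg_le hs0]
  · push Not at hlow
    refine ⟨0, ⟨le_rfl, ht⟩, ?_, fun u hu => (hlow u ⟨hu.1.le, hu.2⟩).le⟩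
    rw [h.1.apply_zero, hsk.1.apply_zero]
    linarith

end ApproxDecomp

theorem approx_skorokhod_bound_general (f a x b y : ℝ → ℝ) (β υ : ℝ)
    (hβ : 0 < β) (hυ : 0 < υ)
    (hsk : SkorokhodDecomp f a x) (happ : ApproxDecomp β υ f b y) :
    ∀ t ∈ Set.Ici (0:ℝ), 0 ≤ b t - a t ∧ b t - a t ≤ υ + β * t := by
  intro t ht
  refine ⟨sub_nonneg.2 (hsk.le_of_admissiblePair happ.1 ht), ?_⟩
  obtain ⟨s, ⟨hs0, hst⟩, hbs, hy⟩ := happ.exists_restart hsk hυ ht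
  have hincr := happ.sub_le_of_forall_Ioc hs0 hst hy
  have has : a s ≤ a t := hsk.1.2.2.1 hs0 ht hst
  have hdrift : β * (t - s) ≤ β * t := mul_le_mul_of_nonneg_left (by linarith) hβ.le
  linarith

/-- an approximate `(β, υ)` decomposition satisfies
`0 ≤ b t - a t ≤ υ + β t`. -/
theorem approx_skorokhod_bound (f a x b y : ℝ → ℝ) (β υ : ℝ)
    (hf : ContinuousOn f (Set.Ici 0)) (hf0 : 0 ≤ f 0)
    (hβ : 0 < β) (hυ : 0 < υ)
    (hsk : SkorokhodDecomp f a x) (happ : ApproxDecomp β υ f b y) :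
    ∀ t ∈ Set.Ici (0:ℝ), 0 ≤ b t - a t ∧ b t - a t ≤ υ + β * t :=
  approx_skorokhod_bound_general f a x b y β υ hβ hυ hsk happ
end

section
/- Let α > 1 and ε > 0. Let f : [0,∞) → ℝ be continuous with f(0) ≥ 0, and suppose yᵉ : [0,∞) → (0,∞) is continuous and satisfies the integral equation yᵉ(t) = f(t) + ε ∫₀ᵗ (yᵉ(u))^{−α} du. Set bᵉ(t) = ε ∫₀ᵗ (yᵉ(u))^{−α} du and let (a, x) be the Skorokhod decomposition of f. Then for all t ≥ 0: 0 ≤ bᵉ(t) − a(t) ≤ (1 + 1/α)(α ε t)^{1/(1+α)}. -/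
/-!
The solution `yᵉ` is pushed up at rate `ε (yᵉ)^{-α}`, so while it stays above a level `C > 0`
its compensator `bᵉ` grows at rate at most `ε C^{-α}`: `(bᵉ, yᵉ)` is an approximate
`(ε C^{-α}, C)` decomposition of `f`. Any admissible compensator dominates the Skorokhod one
(minimality of the reflection), while an approximate `(β, C)` compensator exceeds it by at most
`β t + C`: after the last time the excess is below `β s + C`, the process stays above `C`.
Optimising `ε C^{-α} t + C` over `C` gives `C = (α ε t)^{1/(1+α)}` and the stated bound.
-/

open Set Filter MeasureTheory

open Topology

theorem AdmissiblePair.apply_zero_s5 {f b y : ℝ → ℝ} (h : AdmissiblePair f b y) : b 0 = 0 := by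
  linarith [h.2.2.2.2.1 0 self_mem_Ici, h.2.2.2.2.2]

theorem SkorokhodDecomp.le_of_admissiblePair_s5 {f a x b y : ℝ → ℝ} (hsk : SkorokhodDecomp f a x)
    (hby : AdmissiblePair f b y) {t : ℝ} (ht : 0 ≤ t) : a t ≤ b t := by
  have ha0 := hsk.1.apply_zero_s5
  have hb0 := hby.apply_zero_s5
  obtain ⟨⟨hacont, -, -, -, hxeq, -⟩, hloc⟩ := hsk
  obtain ⟨-, -, hbmono, hynn, hyeq, -⟩ := hby
  by_contra! hlt
  -- `s` is the first time at which `a` takes its value at `t`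
  set T := Icc 0 t ∩ a ⁻¹' {a t}
  have hTclosed : IsClosed T :=
    (hacont.mono fun v hv => hv.1).preimage_isClosed_of_isClosed isClosed_Icc isClosed_singleton
  have hTbdd : BddBelow T := ⟨0, fun v hv => hv.1.1⟩
  obtain ⟨⟨hs0, hst⟩, has : a (sInf T) = a t⟩ := hTclosed.csInf_mem ⟨t, ⟨ht, le_rfl⟩, rfl⟩ hTbdd
  set s := sInf T
  rcases hs0.eq_or_lt with hs | hs
  · have hbt : b 0 ≤ b t := hbmono self_mem_Ici (mem_Ici.2 ht) ht
    linarith [congrArg a hs]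
  · have hxs : 0 < x s := by
      have := hynn s hs0
      rw [hyeq s hs0] at this
      rw [hxeq s hs0, has]
      linarith [hbmono (mem_Ici.2 hs0) (mem_Ici.2 ht) hst]
    have hleft : 𝓝[<] s ≤ 𝓝[Ici 0] s :=
      nhdsWithin_Ioo_eq_nhdsLT hs ▸ nhdsWithin_mono _ fun _ hv => mem_Ici.2 hv.1.le
    obtain ⟨u, hau, hu⟩ :=
      (((hloc s hs0 hxs).filter_mono hleft).and (Ioo_mem_nhdsLT hs)).exists
    have huT : u ∈ T := ⟨⟨hu.1.le, hu.2.le.trans hst⟩, hau.trans has⟩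
    exact (csInf_le hTbdd huT).not_gt hu.2

theorem ApproxDecomp.sub_le_of_skorokhodDecomp {β υ : ℝ} {f b y a x : ℝ → ℝ} (hβ : 0 ≤ β)
    (hυ : 0 ≤ υ) (happ : ApproxDecomp β υ f b y) (hsk : SkorokhodDecomp f a x) {t : ℝ}
    (ht : 0 ≤ t) : b t - a t ≤ β * t + υ := by
  have ha0 := hsk.1.apply_zero_s5
  have hb0 := happ.1.apply_zero_s5
  obtain ⟨⟨hbcont, hycont, -, -, hyeq, -⟩, hincr⟩ := happ
  obtain ⟨⟨hacont, -, hamono, hxnn, hxeq, -⟩, -⟩ := hsk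
  by_contra! hlt
  -- `s` is the last time before `t` at which `b s ≤ a s + β s + υ`
  set S := {s ∈ Icc 0 t | b s ≤ a s + β * s + υ}
  have hIcc : Icc 0 t ⊆ Ici 0 := fun v hv => hv.1
  have hSclosed : IsClosed S := isClosed_Icc.isClosed_le (hbcont.mono hIcc)
    (((hacont.mono hIcc).add (continuousOn_const.mul continuousOn_id)).add continuousOn_const)
  have hSbdd : BddAbove S := ⟨t, fun v hv => hv.1.2⟩
  have h0S : (0 : ℝ) ∈ S := ⟨⟨le_rfl, ht⟩, by simp [ha0, hb0, hυ]⟩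
  obtain ⟨⟨hs0, hst⟩, hbs⟩ := hSclosed.csSup_mem ⟨0, h0S⟩ hSbdd
  set s := sSup S
  have hst' : s < t := hst.lt_of_ne fun h => by
    rw [h] at hbs
    linarith
  have hyυ : ∀ v ∈ Ioc s t, υ ≤ y v := fun v hv => by
    have hv0 : 0 ≤ v := hs0.trans hv.1.le
    have hvS : v ∉ S := fun hvS => (le_csSup hSbdd hvS).not_gt hv.1
    have hbv : a v + β * v + υ < b v := not_le.1 fun h => hvS ⟨⟨hv0, hv.2⟩, h⟩
    linarith [hxnn v hv0, hxeq v hv0, hyeq v hv0, mul_nonneg hβ hv0]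
  have hyυ' : ∀ v ∈ Icc s t, υ ≤ y v := by
    rw [← closure_Ioc hst'.ne]
    refine le_on_closure hyυ continuousOn_const (hycont.mono ?_)
    rw [closure_Ioc hst'.ne]
    exact fun v hv => hs0.trans hv.1
  linarith [hincr s t hs0 hst hyυ', hamono (mem_Ici.2 hs0) (mem_Ici.2 ht) hst]

theorem ContinuousOn.continuousOn_primitive_Ici {g : ℝ → ℝ} {a : ℝ}
    (hg : ContinuousOn g (Ici a)) :
    ContinuousOn (fun t => ∫ u in a..t, g u) (Ici a) := by
  intro t ht
  have hint : IntervalIntegrable g volume (min a a) (max a (t + 1)) := by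
    rw [min_self, max_eq_right (by linarith [mem_Ici.1 ht])]
    exact (hg.mono fun v hv => hv.1).intervalIntegrable_of_Icc (by linarith [mem_Ici.1 ht])
  refine (intervalIntegral.continuousWithinAt_primitive (measure_singleton t)
    hint).mono_of_mem_nhdsWithin ?_
  rw [← Ici_inter_Iic]
  exact inter_mem_nhdsWithin _ (Iic_mem_nhds (lt_add_one t))

theorem approxDecomp_of_eq_integral_rpow_neg {α ε C : ℝ} {f b y : ℝ → ℝ} (hα : 0 ≤ α)
    (hε : 0 ≤ ε) (hC : 0 < C) (hycont : ContinuousOn y (Ici 0))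
    (hypos : ∀ t ∈ Ici (0 : ℝ), 0 < y t) (hyeq : ∀ t ∈ Ici (0 : ℝ), y t = b t + f t)
    (hbeq : ∀ t, b t = ε * ∫ u in (0 : ℝ)..t, y u ^ (-α)) :
    ApproxDecomp (ε * C ^ (-α)) C f b y := by
  have hgcont : ContinuousOn (fun u => y u ^ (-α)) (Ici 0) :=
    hycont.rpow_const fun u hu => Or.inl (hypos u hu).ne'
  have hgint : ∀ s u : ℝ, 0 ≤ s → s ≤ u → IntervalIntegrable (fun v => y v ^ (-α)) volume s u :=
    fun s u hs hsu => (hgcont.mono fun v hv => hs.trans hv.1).intervalIntegrable_of_Icc hsu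
  have hincr : ∀ s u : ℝ, 0 ≤ s → s ≤ u → b u - b s = ε * ∫ v in s..u, y v ^ (-α) :=
    fun s u hs hsu => by
      rw [hbeq, hbeq, ← mul_sub, intervalIntegral.integral_interval_sub_left
        (hgint 0 u le_rfl (hs.trans hsu)) (hgint 0 s le_rfl hs)]
  refine ⟨⟨(continuousOn_const.mul hgcont.continuousOn_primitive_Ici).congr fun t _ => hbeq t,
    hycont, fun s hs u hu hsu => ?_, fun t ht => (hypos t ht).le, hyeq, ?_⟩,
    fun s u hs hsu hyC => ?_⟩
  · have hint : 0 ≤ ∫ v in s..u, y v ^ (-α) := intervalIntegral.integral_nonneg hsu fun v hv =>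
      Real.rpow_nonneg (hypos v (hs.trans hv.1)).le (-α)
    linarith [hincr s u hs hsu, mul_nonneg hε hint]
  · simpa [hbeq] using hyeq 0 self_mem_Ici
  · have hle : ∫ v in s..u, y v ^ (-α) ≤ ∫ _ in s..u, C ^ (-α) :=
      intervalIntegral.integral_mono_on hsu (hgint s u hs hsu) intervalIntegrable_const
        fun v hv => Real.rpow_le_rpow_of_nonpos hC (hyC v hv) (neg_nonpos.2 hα)
    rw [intervalIntegral.integral_const, smul_eq_mul] at hle
    rw [hincr s u hs hsu]
    linarith [mul_le_mul_of_nonneg_left hle hε]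

theorem le_of_forall_le_mul_rpow_neg_add {α K D : ℝ} (hα : 0 < α) (hK : 0 ≤ K)
    (h : ∀ C > 0, D ≤ K * C ^ (-α) + C) :
    D ≤ (1 + 1 / α) * (α * K) ^ (1 / (1 + α)) := by
  have hexp : (1 : ℝ) / (1 + α) ≠ 0 := by positivity
  rcases hK.eq_or_lt with rfl | hK
  · rw [mul_zero, Real.zero_rpow hexp, mul_zero]
    exact le_of_forall_pos_le_add fun C hC => by simpa using h C hC
  -- the minimiser of `C ↦ K C^{-α} + C` is `C = (α K)^{1/(1+α)}`, where `K C^{-α} = C / α`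
  set A := α * K
  have hA : 0 < A := by positivity
  have hmin : K * (A ^ (1 / (1 + α))) ^ (-α) = A ^ (1 / (1 + α)) / α := by
    calc K * (A ^ (1 / (1 + α))) ^ (-α) = A ^ (1 : ℝ) * A ^ (1 / (1 + α) * -α) / α := by
          rw [← Real.rpow_mul hA.le, Real.rpow_one]
          field_simp
          ring
      _ = A ^ (1 / (1 + α)) / α := by
          rw [← Real.rpow_add hA]
          congr 2
          field_simp
          ring
  calc D ≤ K * (A ^ (1 / (1 + α))) ^ (-α) + A ^ (1 / (1 + α)) := h _ (by positivity)
    _ = (1 + 1 / α) * A ^ (1 / (1 + α)) := by rw [hmin]; ring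

theorem approx_skorokhod_integral_bound_general (α ε : ℝ) (hα : 1 < α) (hε : 0 < ε)
    (f a x yε bε : ℝ → ℝ)
    (hsk : SkorokhodDecomp f a x)
    (hycont : ContinuousOn yε (Set.Ici 0))
    (hypos : ∀ t ∈ Set.Ici (0:ℝ), 0 < yε t)
    (hyeq : ∀ t ∈ Set.Ici (0:ℝ), yε t = f t + ε * ∫ u in (0:ℝ)..t, (yε u) ^ (-α))
    (hbeq : ∀ t, bε t = ε * ∫ u in (0:ℝ)..t, (yε u) ^ (-α)) :
    ∀ t ∈ Set.Ici (0:ℝ),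
      0 ≤ bε t - a t ∧ bε t - a t ≤ (1 + 1/α) * (α * ε * t) ^ (1/(1+α)) := by
  intro t ht
  have hα0 : 0 < α := one_pos.trans hα
  have happrox (C : ℝ) (hC : 0 < C) : ApproxDecomp (ε * C ^ (-α)) C f bε yε :=
    approxDecomp_of_eq_integral_rpow_neg hα0.le hε.le hC hycont hypos
      (fun t ht => by rw [hyeq t ht, hbeq t, add_comm]) hbeq
  refine ⟨sub_nonneg.2 (hsk.le_of_admissiblePair_s5 (happrox 1 one_pos).1 ht), ?_⟩
  rw [mul_assoc α]
  refine le_of_forall_le_mul_rpow_neg_add hα0 (mul_nonneg hε.le ht) fun C hC => ?_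
  linarith [(happrox C hC).sub_le_of_skorokhodDecomp (by positivity) hC.le hsk ht]

/-- if `yᵉ` solves `yᵉ t = f t + ε ∫₀ᵗ (yᵉ u)^(-α) du` with `α > 1`,
then `bᵉ t = ε ∫₀ᵗ (yᵉ u)^(-α) du` satisfies `0 ≤ bᵉ t - a t ≤ (1 + 1/α)(α ε t)^(1/(1+α))`,
where `(a, x)` is the Skorokhod decomposition of `f`. -/
theorem approx_skorokhod_integral_bound (α ε : ℝ) (hα : 1 < α) (hε : 0 < ε)
    (f a x yε bε : ℝ → ℝ)
    (hf : ContinuousOn f (Set.Ici 0)) (hf0 : 0 ≤ f 0)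
    (hsk : SkorokhodDecomp f a x)
    (hycont : ContinuousOn yε (Set.Ici 0))
    (hypos : ∀ t ∈ Set.Ici (0:ℝ), 0 < yε t)
    (hyeq : ∀ t ∈ Set.Ici (0:ℝ), yε t = f t + ε * ∫ u in (0:ℝ)..t, (yε u) ^ (-α))
    (hbeq : ∀ t, bε t = ε * ∫ u in (0:ℝ)..t, (yε u) ^ (-α)) :
    ∀ t ∈ Set.Ici (0:ℝ),
      0 ≤ bε t - a t ∧ bε t - a t ≤ (1 + 1/α) * (α * ε * t) ^ (1/(1+α)) :=
  approx_skorokhod_integral_bound_general α ε hα hε f a x yε bε hsk hycont hypos hyeq hbeq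
end
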